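/- Let a, b, c be elements of a commutative ring and let 1 ≤ k ≤ n be natural numbers. Then P_{n,k}, the total weight of all step sequences of length n−1 which, started at height 1, have height ≥ 1 after every step and final height k, equals ∑_{i=0}^{⌊(n−k)/2⌋} C(n−1, k+2i−1)·(C(k+2i−1, i) − C(k+2i−1, i−1))·a^{k+i−1}·b^{n−k−2i}·c^{i}. -/

import Mathlib

open Finset

/-- The step sequences of length `L`: functions `Fin L → ℤ` with every value in `{1, 0, -1}`. -/
def stepSeqs (L : ℕ) : Finset (Fin L → ℤ) :=
  Fintype.piFinset fun _ => ({1, 0, -1} : Finset ℤ)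

/-- The weight of a step sequence: `a ^ (#up steps) * b ^ (#flat steps) * c ^ (#down steps)`. -/
def seqWeight {R : Type*} [CommRing R] (a b c : R) {L : ℕ} (s : Fin L → ℤ) : R :=
  a ^ (Finset.univ.filter (fun i => s i = 1)).card *
    b ^ (Finset.univ.filter (fun i => s i = 0)).card *
      c ^ (Finset.univ.filter (fun i => s i = -1)).card

/-- The height of a step sequence after `i` steps, started at height `h`. -/
def seqHeight {L : ℕ} (h : ℤ) (s : Fin L → ℤ) (i : ℕ) : ℤ :=
  h + ∑ j ∈ Finset.univ.filter (fun j : Fin L => (j : ℕ) < i), s j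

/-
The total weight `P L k` of positive paths of length `L` ending at height `k ≥ 1` obeys the
transfer recursion `P (L+1) k = a P L (k-1) + b P L k + c P L (k+1)` (split off the last step),
with `P L k = 0` for `k ≤ 0`. The closed form obeys the same recursion: it counts the choice of
the `L - m` flat steps by `C(L, m)` and the positive up/down skeleton of length `m = k - 1 + 2i`
by the ballot number `C(m, i) - C(m, i-1)`, and both factors satisfy Pascal's rule; at `k = 1`
the missing `a`-term is accounted for by `C(2j+1, j+1) = C(2j+1, j)`.
-/
namespace WeightedPaths

variable {R : Type*} [CommRing R] (a b c : R)

lemma sum_stepSeqs_succ {M : Type*} [AddCommMonoid M] {L : ℕ} (f : (Fin (L + 1) → ℤ) → M) :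
    ∑ s ∈ stepSeqs (L + 1), f s =
      ∑ v ∈ ({1, 0, -1} : Finset ℤ), ∑ s ∈ stepSeqs L, f (Fin.snoc s v) := by
  have h := filter_piFinset_eq_map_snocEquiv (fun (_ : Fin (L + 1)) => ({1, 0, -1} : Finset ℤ))
    (fun _ => True)
  simp only [filter_true] at h
  rw [stepSeqs, h, sum_map, sum_product]
  rfl

lemma card_filter_snoc {L : ℕ} (s : Fin L → ℤ) (v z : ℤ) :
    #{i | (Fin.snoc s v : Fin (L + 1) → ℤ) i = z} = #{i | s i = z} + if v = z then 1 else 0 := by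
  rw [card_filter, card_filter, Fin.sum_univ_castSucc]
  simp [Fin.snoc_castSucc, Fin.snoc_last]

lemma seqWeight_snoc {L : ℕ} (s : Fin L → ℤ) (v : ℤ) :
    seqWeight a b c (Fin.snoc s v) = seqWeight a b c s *
      ((if v = 1 then a else 1) * (if v = 0 then b else 1) * (if v = -1 then c else 1)) := by
  unfold seqWeight
  rw [card_filter_snoc, card_filter_snoc, card_filter_snoc]
  split_ifs <;> first | omega | (simp only [pow_succ, add_zero]; ring)

lemma seqHeight_snoc_of_le {L : ℕ} (h : ℤ) (s : Fin L → ℤ) (v : ℤ) {i : ℕ} (hi : i ≤ L) :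
    seqHeight h (Fin.snoc s v) i = seqHeight h s i := by
  simp only [seqHeight, sum_filter, Fin.sum_univ_castSucc, Fin.snoc_castSucc, Fin.val_castSucc,
    Fin.snoc_last, Fin.val_last, if_neg (show ¬L < i by omega), add_zero]

lemma seqHeight_snoc_succ {L : ℕ} (h : ℤ) (s : Fin L → ℤ) (v : ℤ) :
    seqHeight h (Fin.snoc s v) (L + 1) = seqHeight h s L + v := by
  simp only [seqHeight, sum_filter, Fin.sum_univ_castSucc, Fin.snoc_castSucc, Fin.snoc_last,
    if_true, Fin.is_lt]
  ring

lemma snoc_positive_iff {L : ℕ} (s : Fin L → ℤ) (v : ℤ) {k : ℤ} (hk : 1 ≤ k) :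
    ((∀ i ≤ L + 1, 1 ≤ seqHeight 1 (Fin.snoc s v) i) ∧ seqHeight 1 (Fin.snoc s v) (L + 1) = k) ↔
      (∀ i ≤ L, 1 ≤ seqHeight 1 s i) ∧ seqHeight 1 s L = k - v := by
  rw [seqHeight_snoc_succ]
  constructor
  · rintro ⟨hpos, hend⟩
    refine ⟨fun i hi => ?_, by omega⟩
    simpa only [seqHeight_snoc_of_le _ _ _ hi] using hpos i (by omega)
  · rintro ⟨hpos, hend⟩
    refine ⟨fun i hi => ?_, by omega⟩
    rcases Nat.lt_or_ge i (L + 1) with hi' | hi'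
    · rw [seqHeight_snoc_of_le _ _ _ (by omega)]
      exact hpos i (by omega)
    · rw [show i = L + 1 by omega, seqHeight_snoc_succ]
      omega

def pathWeight (L : ℕ) (k : ℤ) : R :=
  ∑ s ∈ (stepSeqs L).filter
      (fun s => (∀ i ≤ L, 1 ≤ seqHeight 1 s i) ∧ seqHeight 1 s L = k),
    seqWeight a b c s

lemma pathWeight_of_nonpos (L : ℕ) {k : ℤ} (hk : k ≤ 0) : pathWeight a b c L k = 0 := by
  refine sum_eq_zero fun s hs => ?_
  obtain ⟨hpos, hend⟩ := (mem_filter.1 hs).2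
  have := hpos L le_rfl
  omega

lemma pathWeight_zero (k : ℤ) : pathWeight a b c 0 k = if k = 1 then 1 else 0 := by
  have hheight (s : Fin 0 → ℤ) (i : ℕ) : seqHeight 1 s i = 1 := by simp [seqHeight]
  simp only [pathWeight, stepSeqs, Fintype.piFinset_of_isEmpty, hheight, le_refl, implies_true,
    true_and, eq_comm (a := (1 : ℤ))]
  split_ifs with hk <;> simp [seqWeight, hk]

lemma pathWeight_succ (L : ℕ) {k : ℤ} (hk : 1 ≤ k) :
    pathWeight a b c (L + 1) k =
      a * pathWeight a b c L (k - 1) + b * pathWeight a b c L k +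
        c * pathWeight a b c L (k + 1) := by
  simp only [pathWeight, sum_filter, sum_stepSeqs_succ, snoc_positive_iff _ _ hk, seqWeight_snoc,
    mul_sum]
  rw [sum_insert (by decide), sum_insert (by decide), sum_singleton]
  norm_num [mul_comm, add_assoc]

def ballot (m : ℕ) : ℕ → ℤ
  | 0 => 1
  | i + 1 => m.choose (i + 1) - m.choose i

lemma ballot_succ_succ (m i : ℕ) : ballot (m + 1) (i + 1) = ballot m (i + 1) + ballot m i := by
  cases i with
  | zero => simp [ballot]
  | succ i => simp only [ballot, Nat.choose_succ_succ', Nat.cast_add]; ring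

lemma ballot_two_mul_add_one_succ (j : ℕ) : ballot (2 * j + 1) (j + 1) = 0 := by
  rw [ballot, Nat.choose_symm_half, sub_self]

lemma cast_ballot (m i : ℕ) :
    (ballot m i : R) = m.choose i - if i = 0 then 0 else (m.choose (i - 1) : R) := by
  cases i <;> simp [ballot]

def binomTerm (L m : ℕ) : R := L.choose m * b ^ (L - m)

lemma binomTerm_of_lt {L m : ℕ} (h : L < m) : binomTerm b L m = 0 := by
  simp [binomTerm, Nat.choose_eq_zero_of_lt h]

lemma binomTerm_succ_zero (L : ℕ) : binomTerm b (L + 1) 0 = b * binomTerm b L 0 := by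
  simp [binomTerm, pow_succ, mul_comm]

lemma binomTerm_succ_succ (L m : ℕ) :
    binomTerm b (L + 1) (m + 1) = binomTerm b L m + b * binomTerm b L (m + 1) := by
  rcases lt_or_ge L (m + 1) with h | h
  · rw [binomTerm_of_lt b h, mul_zero, add_zero, binomTerm, binomTerm, Nat.choose_succ_succ',
      Nat.choose_eq_zero_of_lt h, add_zero, Nat.add_sub_add_right]
  · rw [binomTerm, binomTerm, binomTerm, Nat.choose_succ_succ', Nat.add_sub_add_right,
      show L - m = L - (m + 1) + 1 by omega]
    push_cast
    ring

def summand (L K i : ℕ) : R :=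
  binomTerm b L (K + 2 * i) * ballot (K + 2 * i) i * a ^ (K + i) * c ^ i

def closedForm (L K : ℕ) : R :=
  ∑ i ∈ range ((L - K) / 2 + 1), summand a b c L K i

lemma closedForm_eq_sum_range {L K N : ℕ} (hN : (L - K) / 2 < N) :
    closedForm a b c L K = ∑ i ∈ range N, summand a b c L K i := by
  refine sum_subset (range_subset_range.2 hN) fun i _ hi => ?_
  rw [summand, binomTerm_of_lt b (by simp at hi; omega)]
  simp

lemma summand_succ_succ_zero (L K : ℕ) :
    summand a b c (L + 1) (K + 1) 0 = a * summand a b c L K 0 + b * summand a b c L (K + 1) 0 := by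
  simp only [summand, binomTerm_succ_succ, mul_zero, add_zero, ballot]
  ring

lemma summand_succ_succ_succ (L K j : ℕ) :
    summand a b c (L + 1) (K + 1) (j + 1) = a * summand a b c L K (j + 1) +
      b * summand a b c L (K + 1) (j + 1) + c * summand a b c L (K + 2) j := by
  simp only [summand, show K + 1 + 2 * (j + 1) = K + 2 * (j + 1) + 1 by ring,
    show K + 2 + 2 * j = K + 2 * (j + 1) by ring, binomTerm_succ_succ]
  rw [ballot_succ_succ]
  push_cast
  ring

lemma summand_succ_zero_zero (L : ℕ) :
    summand a b c (L + 1) 0 0 = b * summand a b c L 0 0 := by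
  simp only [summand, mul_zero, add_zero, binomTerm_succ_zero]
  ring

lemma summand_succ_zero_succ (L j : ℕ) :
    summand a b c (L + 1) 0 (j + 1) = b * summand a b c L 0 (j + 1) + c * summand a b c L 1 j := by
  simp only [summand, show 0 + 2 * (j + 1) = 2 * j + 1 + 1 by ring,
    show 1 + 2 * j = 2 * j + 1 by ring, binomTerm_succ_succ]
  rw [ballot_succ_succ (2 * j + 1) j, ballot_two_mul_add_one_succ]
  push_cast
  ring

lemma closedForm_succ_succ (L K : ℕ) :
    closedForm a b c (L + 1) (K + 1) = a * closedForm a b c L K + b * closedForm a b c L (K + 1) +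
      c * closedForm a b c L (K + 2) := by
  rw [closedForm_eq_sum_range a b c (N := L + 2) (by omega),
    closedForm_eq_sum_range a b c (N := L + 2) (by omega),
    closedForm_eq_sum_range a b c (N := L + 2) (by omega),
    closedForm_eq_sum_range a b c (N := L + 1) (by omega)]
  simp only [sum_range_succ' _ (L + 1), summand_succ_succ_zero, summand_succ_succ_succ, mul_sum,
    mul_add, sum_add_distrib]
  ring

lemma closedForm_succ_zero (L : ℕ) :
    closedForm a b c (L + 1) 0 = b * closedForm a b c L 0 + c * closedForm a b c L 1 := by
  rw [closedForm_eq_sum_range a b c (N := L + 2) (by omega),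
    closedForm_eq_sum_range a b c (N := L + 2) (by omega),
    closedForm_eq_sum_range a b c (N := L + 1) (by omega)]
  simp only [sum_range_succ' _ (L + 1), summand_succ_zero_zero, summand_succ_zero_succ, mul_sum,
    mul_add, sum_add_distrib]
  ring

lemma closedForm_zero (K : ℕ) : closedForm a b c 0 K = if K = 0 then 1 else 0 := by
  rcases K.eq_zero_or_pos with rfl | hK
  · simp [closedForm, summand, binomTerm, ballot]
  · simp [closedForm, summand, binomTerm_of_lt b hK, hK.ne']

lemma pathWeight_eq_closedForm (L K : ℕ) :
    pathWeight a b c L (K + 1) = closedForm a b c L K := by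
  induction L generalizing K with
  | zero => simp [pathWeight_zero, closedForm_zero]
  | succ L ih =>
    rw [pathWeight_succ a b c L (by omega), add_sub_cancel_right]
    rcases K with _ | K
    · rw [closedForm_succ_zero, ← ih 0, ← ih 1, pathWeight_of_nonpos a b c L (by simp)]
      push_cast
      ring
    · have hK : ((K + 1 : ℕ) : ℤ) + 1 + 1 = ((K + 2 : ℕ) : ℤ) + 1 := by push_cast; ring
      rw [closedForm_succ_succ, hK, ih (K + 2), ih (K + 1), Nat.cast_succ, ih K]

end WeightedPaths

open WeightedPaths

theorem weighted_paths_P_n_k_general {R : Type*} [CommRing R] (a b c : R) (n k : ℕ)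
    (hk : 1 ≤ k) :
    (∑ s ∈ (stepSeqs (n - 1)).filter
        (fun s => (∀ i ≤ n - 1, 1 ≤ seqHeight 1 s i) ∧ seqHeight 1 s (n - 1) = (k : ℤ)),
      seqWeight a b c s)
      = ∑ i ∈ Finset.range ((n - k) / 2 + 1),
          (Nat.choose (n - 1) (k + 2 * i - 1) : R) *
            ((Nat.choose (k + 2 * i - 1) i : R) -
              (if i = 0 then 0 else (Nat.choose (k + 2 * i - 1) (i - 1) : R))) *
            a ^ (k + i - 1) * b ^ (n - k - 2 * i) * c ^ i := by
  obtain ⟨K, rfl⟩ : ∃ K, k = K + 1 := ⟨k - 1, by omega⟩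
  have hpath := pathWeight_eq_closedForm a b c (n - 1) K
  rw [pathWeight, closedForm, show (n - 1 - K) / 2 = (n - (K + 1)) / 2 by omega] at hpath
  push_cast
  rw [hpath]
  refine sum_congr rfl fun i _ => ?_
  rw [summand, binomTerm, cast_ballot, show K + 1 + 2 * i - 1 = K + 2 * i by omega,
    show K + 1 + i - 1 = K + i by omega, show n - (K + 1) - 2 * i = n - 1 - (K + 2 * i) by omega]
  ring

/-- `P_{n,k}`, the total weight of step sequences of length `n-1` started at
height `1`, staying at height `≥ 1`, with final height `k`. -/
theorem weighted_paths_P_n_k {R : Type*} [CommRing R] (a b c : R) (n k : ℕ)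
    (hk : 1 ≤ k) (hkn : k ≤ n) :
    (∑ s ∈ (stepSeqs (n - 1)).filter
        (fun s => (∀ i ≤ n - 1, 1 ≤ seqHeight 1 s i) ∧ seqHeight 1 s (n - 1) = (k : ℤ)),
      seqWeight a b c s)
      = ∑ i ∈ Finset.range ((n - k) / 2 + 1),
          (Nat.choose (n - 1) (k + 2 * i - 1) : R) *
            ((Nat.choose (k + 2 * i - 1) i : R) -
              (if i = 0 then 0 else (Nat.choose (k + 2 * i - 1) (i - 1) : R))) *
            a ^ (k + i - 1) * b ^ (n - k - 2 * i) * c ^ i :=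
  weighted_paths_P_n_k_general a b c n k hk
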